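/- arXiv:2311.03579 — 2 statements merged into one kernel-verified Lean document; each statement's English description precedes it below -/
import Mathlib

section
/- For a positive real r, the function F(r) = log(1+r) - r + (1+r)·S/(S+I) (with S, I positive reals fixed) is maximized over r > 0 at r* = S/I, and the maximum value equals log(1 + S/I). -/
theorem stmt0 (S I : ℝ) (hS : 0 < S) (hI : 0 < I)
    (F : ℝ → ℝ) (hF : ∀ r, F r = Real.log (1 + r) - r + (1 + r) * S / (S + I)) :
    (∀ r, 0 < r → F r ≤ F (S / I)) ∧ F (S / I) = Real.log (1 + S / I) := by
  have hSI : 0 < S + I := by linarith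
  have ht : (0:ℝ) < 1 + S / I := by positivity
  have hval : (1 + S / I) * S / (S + I) = S / I := by field_simp; ring
  constructor
  · intro r hr
    rw [hF, hF]
    have h1 : (0:ℝ) < 1 + r := by linarith
    have hlog : Real.log (1 + r) - Real.log (1 + S / I) ≤ (1 + r) / (1 + S / I) - 1 := by
      rw [← Real.log_div h1.ne' ht.ne']
      exact Real.log_le_sub_one_of_pos (by positivity)
    have heq : (1 + r) / (1 + S / I) - 1 = (r - S / I) * I / (S + I) := by
      field_simp; ring
    have heq2 : (r - S / I) * I / (S + I)
        = (r - S / I) - (r - S / I) * S / (S + I) := by field_simp; ring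
    have heq3 : (r - S / I) * S / (S + I)
        = (1 + r) * S / (S + I) - (1 + S / I) * S / (S + I) := by field_simp; ring
    linarith
  · rw [hF, hval]; ring
end

section
/- (Dinkelbach iterate monotonicity) Let N, D : α → ℝ with D x > 0 on a feasible set A. Define the iteration: given x_i ∈ A, set t_i = N x_i / D x_i and pick x_{i+1} ∈ A maximizing x ↦ N x − t_i · D x over A. Then the ratio sequence t_i = N x_i / D x_i is nondecreasing: t_{i+1} ≥ t_i. -/
/-! The iterate `x i` itself scores `N (x i) - t_i * D (x i) = 0` in the parametric problem at
`t_i`, so the maximizer `x (i + 1)` scores at least `0`, i.e. `t_i * D (x (i + 1)) ≤ N (x (i + 1))`. -/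

theorem div_le_div_of_sub_div_mul_le {K : Type*} [Field K] [LinearOrder K] [IsStrictOrderedRing K]
    {a b c d : K} (hb : b ≠ 0) (hd : 0 < d) (h : a - a / b * b ≤ c - a / b * d) :
    a / b ≤ c / d := by
  rw [div_mul_cancel₀ a hb, sub_self, sub_nonneg] at h
  rwa [le_div_iff₀ hd]

theorem stmt14 {α : Type*} (A : Set α) (N D : α → ℝ) (hD : ∀ x ∈ A, 0 < D x)
    (x : ℕ → α) (hx : ∀ i, x i ∈ A)
    (hstep : ∀ i, ∀ y ∈ A,
      N y - (N (x i) / D (x i)) * D y ≤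
        N (x (i + 1)) - (N (x i) / D (x i)) * D (x (i + 1))) :
    ∀ i, N (x i) / D (x i) ≤ N (x (i + 1)) / D (x (i + 1)) := fun i =>
  div_le_div_of_sub_div_mul_le (hD _ (hx i)).ne' (hD _ (hx (i + 1))) (hstep i (x i) (hx i))
end
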